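/- A finite pregeometry G is flat if and only if α_G(X) ≥ 0 whenever X ⊆ G is a union of closed sets. -/

import Mathlib

open scoped Classical

/-- A combinatorial pregeometry (matroid) on the ground type `α`, given by a
dimension (rank) function on finite subsets. -/
structure Pregeometry (α : Type*) [DecidableEq α] where
  dim : Finset α → ℕ
  dim_empty : dim ∅ = 0
  dim_le_insert : ∀ (A : Finset α) (x : α), dim A ≤ dim (insert x A)
  insert_le_dim : ∀ (A : Finset α) (x : α), dim (insert x A) ≤ dim A + 1
  submodular : ∀ A B : Finset α, dim (A ∪ B) + dim (A ∩ B) ≤ dim A + dim B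

namespace Pregeometry

variable {α : Type*} [DecidableEq α] (G : Pregeometry α)

/-- Closure of an arbitrary subset. -/
def cl (Y : Set α) : Set α :=
  {x | ∃ A : Finset α, ↑A ⊆ Y ∧ G.dim (insert x A) = G.dim A}

/-- `Y` is closed (in the ambient pregeometry `G`). -/
def IsClosed (Y : Set α) : Prop := G.cl Y = Y

/-- `X` is a closed set of the subpregeometry of `G` induced on `P`
(whose closure operator is `Y ↦ cl Y ∩ P`). -/
def IsClosedIn (P X : Set α) : Prop := X ⊆ P ∧ G.cl X ∩ P = X

/-- Dimension of an arbitrary subset, with value `⊤` when infinite-dimensional. -/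
noncomputable def edim (Y : Set α) : ℕ∞ :=
  ⨆ (A : Finset α) (_ : ↑A ⊆ Y), (G.dim A : ℕ∞)

/-- The (natural number) dimension of a finite-dimensional subset. -/
noncomputable def sdim (Y : Set α) : ℕ := (G.edim Y).toNat

/-- The alternating inclusion–exclusion sum
`Δ_G(Σ) = Σ_{∅ ≠ S ⊆ Σ} (-1)^{|S|+1} d(⋂ S)` of a finite collection of sets. -/
noncomputable def flatSum (Sig : Finset (Set α)) : ℤ :=
  ∑ S ∈ Sig.powerset.filter (· ≠ ∅),
    (-1) ^ (S.card + 1) * (G.sdim (⋂₀ ↑S) : ℤ)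

/-- `P ⊑* Q`: for the subpregeometries induced on `P ⊆ Q`, the dimension of the
intersection of two closed sets of `P` equals the dimension of the intersection
of their closures in `Q` (the closure of `X` in `Q` being `cl X ∩ Q`). -/
def SqStar (P Q : Set α) : Prop := P ⊆ Q ∧
  ∀ X₁ X₂ : Set α, G.IsClosedIn P X₁ → G.IsClosedIn P X₂ →
    G.edim (X₁ ∩ X₂) = G.edim (G.cl X₁ ∩ G.cl X₂ ∩ Q)

/-- `P ⊑ Q`: `P` is strongly embedded in `Q`: for every finite collection `Σ` of
finite-dimensional closed sets of `Q`, `Δ_P(Σ_P) ≤ Δ_Q(Σ)` where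
`Σ_P = {E ∩ P : E ∈ Σ}`. -/
def Sq (P Q : Set α) : Prop := P ⊆ Q ∧
  ∀ Sig : Finset (Set α), (∀ E ∈ Sig, G.IsClosedIn Q E) →
    (∀ E ∈ Sig, G.edim E ≠ ⊤) →
    G.flatSum (Sig.image (· ∩ P)) ≤ G.flatSum Sig

/-- The subpregeometry induced on `P` is flat: every finite collection of
finite-dimensional closed sets satisfies `d(⋃ Σ) ≤ Δ(Σ)`. -/
def FlatIn (P : Set α) : Prop :=
  ∀ Sig : Finset (Set α), (∀ E ∈ Sig, G.IsClosedIn P E) →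
    (∀ E ∈ Sig, G.edim E ≠ ⊤) →
    (G.sdim (⋃₀ ↑Sig) : ℤ) ≤ G.flatSum Sig

/-- The α-function of the subpregeometry of `G` induced on `P`:
`α(X) = |X| − d(X) − Σ_{Y ⊊ X closed} α(Y)`. -/
noncomputable def alphaIn (P : Set α) (X : Finset α) : ℤ :=
  (X.card : ℤ) - (G.dim X : ℤ) -
    ∑ Y ∈ (X.powerset.filter fun Y => Y ≠ X ∧ G.IsClosedIn P ↑Y).attach,
      alphaIn P Y.1
termination_by X.card
decreasing_by
  have h := Y.2
  simp only [Finset.mem_filter, Finset.mem_powerset] at h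
  exact Finset.card_lt_card (lt_of_le_of_ne h.1 h.2.1)

end Pregeometry

/-- A hypergraph on the vertex type `α`: a set of nonempty finite edges. -/
structure PaperHypergraph (α : Type*) where
  edges : Set (Finset α)
  nonempty_edges : ∀ e ∈ edges, e ≠ ∅

namespace PaperHypergraph

variable {α : Type*} [DecidableEq α] (A : PaperHypergraph α)

/-- The set of edges contained in a set of vertices. -/
def edgesIn (P : Set α) : Set (Finset α) := {e | e ∈ A.edges ∧ ↑e ⊆ P}

/-- The predimension `δ(P) = |P| − |R[P]|` of a finite set of vertices. -/
noncomputable def delta (P : Finset α) : ℤ :=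
  (P.card : ℤ) - (A.edgesIn ↑P).ncard

/-- The relative predimension `δ(L/P) = |L∖P| − |R[L∪P]∖R[P]|`. -/
noncomputable def deltaRel (L : Finset α) (P : Set α) : ℤ :=
  ((↑L \ P : Set α).ncard : ℤ) -
    ({e | e ∈ A.edges ∧ ↑e ⊆ ↑L ∪ P ∧ ¬ ↑e ⊆ P} : Set (Finset α)).ncard

/-- `P` is self-sufficient in `A`: `δ(X/P) ≥ 0` for every finite `X`, stated so
as to be meaningful even when infinitely many edges are involved. -/
def SelfSuff (P : Set α) : Prop :=
  ∀ X : Finset α, ∀ Es : Finset (Finset α),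
    (∀ e ∈ Es, e ∈ A.edges ∧ ↑e ⊆ ↑X ∪ P ∧ ¬ ↑e ⊆ P) →
    (Es.card : ℤ) ≤ ((↑X \ P : Set α).ncard : ℤ)

/-- The dimension function associated to a hypergraph:
`d(X) = inf {δ(B) : X ⊆ B finite}`. -/
noncomputable def hdim (X : Finset α) : ℤ :=
  sInf {d : ℤ | ∃ B : Finset α, X ⊆ B ∧ d = A.delta B}

/-- The induced subhypergraph on a set `P` of vertices (keeping `α` as the
ambient vertex type). -/
def restrict (P : Set α) : PaperHypergraph α :=
  ⟨{e | e ∈ A.edges ∧ ↑e ⊆ P}, fun e he => A.nonempty_edges e he.1⟩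

/-- A pregeometry `G` is represented by the hypergraph `A` if the associated
dimension function of `A` is the dimension function of `G`. -/
def Represents (G : Pregeometry α) : Prop :=
  ∀ X : Finset α, (G.dim X : ℤ) = A.hdim X

end PaperHypergraph

/-! Möbius inversion over the flats. The recursion defining `α` says that
`|X| - d(X) = Σ α(Y)` over `Y = X` and the flats `Y ⊊ X`; for a flat `F` this reads
`d(F) = |F| - Σ_{Y ⊆ F flat} α(Y)`. Flats are closed under intersection, so inclusion–exclusion,
applied to points and to flats separately, turns `Δ(Σ)` into `|⋃Σ| - Σ α(Y)` over the flats `Y`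
lying in some member of `Σ`. With `U = ⋃Σ`, flatness therefore says that this sum of `α` is at
most `|U| - d(U) = α(U) + Σ_{Y ⊊ U flat} α(Y)`, which holds when `α ≥ 0` on `U` and on flats.
Conversely, taking for `Σ` the proper flats of any `X` and using `d(X) ≤ d(U) + |X \ U|` shows
that flatness forces `α(X) ≥ 0`. -/

open Finset

theorem Finset.inclusion_exclusion_sum_filter_exists {ι β : Type*} (s : Finset ι) (B : Finset β)
    (p : ι → β → Prop) (f : β → ℤ) :
    ∑ b ∈ B with ∃ i ∈ s, p i b, f b =
      ∑ t ∈ s.powerset with t.Nonempty, (-1) ^ (#t + 1) * ∑ b ∈ B with ∀ i ∈ t, p i b, f b := by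
  have key (b : β) := indicator_biUnion_eq_sum_powerset s (fun i => {b | p i b}) f b
  simp only [Set.indicator_apply, Set.mem_iUnion, Set.mem_iInter, Set.mem_ofPred_eq,
    exists_prop, smul_eq_mul] at key
  simp_rw [sum_filter (s := B), mul_sum]
  rw [sum_comm]
  exact sum_congr rfl fun b _ => key b

namespace Pregeometry

variable {α : Type*} [DecidableEq α] (G : Pregeometry α)

lemma dim_union_le (A B : Finset α) : G.dim (A ∪ B) ≤ G.dim A + #B := by
  induction B using Finset.induction_on with
  | empty => simp
  | insert x B hx ih =>
    rw [union_insert, card_insert_of_notMem hx]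
    linarith [G.insert_le_dim (A ∪ B) x]

lemma dim_le_dim_union (A B : Finset α) : G.dim A ≤ G.dim (A ∪ B) := by
  induction B using Finset.induction_on with
  | empty => simp
  | insert x B hx ih =>
    rw [union_insert]
    exact ih.trans (G.dim_le_insert _ x)

lemma dim_mono {A B : Finset α} (h : A ⊆ B) : G.dim A ≤ G.dim B := by
  simpa [union_eq_right.mpr h] using G.dim_le_dim_union A B

lemma subset_cl (S : Set α) : S ⊆ G.cl S := fun x hx =>
  ⟨{x}, by simpa using hx, by rw [insert_eq_self.mpr (mem_singleton_self x)]⟩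

lemma cl_mono {S T : Set α} (h : S ⊆ T) : G.cl S ⊆ G.cl T := fun _ ⟨A, hA, hd⟩ =>
  ⟨A, hA.trans h, hd⟩

lemma isClosed_sInter {S : Set (Set α)} (hS : ∀ E ∈ S, G.IsClosed E) : G.IsClosed (⋂₀ S) :=
  (Set.subset_sInter fun E hE => (G.cl_mono (Set.sInter_subset_of_mem hE)).trans (hS E hE).subset)
    |>.antisymm (G.subset_cl _)

lemma isClosedIn_univ_iff {S : Set α} : G.IsClosedIn Set.univ S ↔ G.IsClosed S := by
  simp [IsClosedIn, IsClosed]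

lemma edim_eq_dim_toFinset (Y : Set α) [Fintype Y] : G.edim Y = G.dim Y.toFinset :=
  (iSup₂_le fun _ hA => by exact_mod_cast G.dim_mono fun _ ha => Set.mem_toFinset.mpr (hA ha))
    |>.antisymm (le_iSup₂_of_le Y.toFinset (by simp) le_rfl)

lemma sdim_eq_dim_toFinset (Y : Set α) [Fintype Y] : G.sdim Y = G.dim Y.toFinset := by
  simp [sdim, edim_eq_dim_toFinset]

section Fintype

variable [Fintype α]

lemma edim_ne_top (Y : Set α) : G.edim Y ≠ ⊤ := by
  simp [edim_eq_dim_toFinset]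

noncomputable def properFlats (X : Finset α) : Finset (Finset α) := {Y | G.IsClosed ↑Y ∧ Y ⊂ X}

noncomputable def flatsIn (F : Set α) : Finset (Finset α) := {Y | G.IsClosed ↑Y ∧ ↑Y ⊆ F}

lemma alphaIn_univ_eq (X : Finset α) :
    G.alphaIn Set.univ X = #X - G.dim X - ∑ Y ∈ G.properFlats X, G.alphaIn Set.univ Y := by
  rw [alphaIn, sum_attach]
  congr 2
  ext Y
  simp [properFlats, isClosedIn_univ_iff, ssubset_iff_subset_ne]
  tauto

lemma card_sub_dim_eq_sum_alphaIn (X : Finset α) :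
    (#X - G.dim X : ℤ) = ∑ Y ∈ insert X (G.properFlats X), G.alphaIn Set.univ Y := by
  rw [sum_insert (by simp [properFlats]), alphaIn_univ_eq]
  ring

lemma flatsIn_coe {F : Finset α} (hF : G.IsClosed ↑F) :
    G.flatsIn ↑F = insert F (G.properFlats F) := by
  ext Y
  simp only [flatsIn, properFlats, mem_filter, mem_univ, true_and, mem_insert, coe_subset,
    ssubset_iff_subset_ne]
  constructor
  · rintro ⟨hY, hYF⟩
    exact (eq_or_ne Y F).imp_right fun h => ⟨hY, hYF, h⟩
  · rintro (rfl | ⟨hY, hYF, -⟩)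
    exacts [⟨hF, subset_rfl⟩, ⟨hY, hYF⟩]

lemma sdim_eq_card_sub_sum_alphaIn {F : Set α} (hF : G.IsClosed F) :
    (G.sdim F : ℤ) = #F.toFinset - ∑ Y ∈ G.flatsIn F, G.alphaIn Set.univ Y := by
  have hflats := G.flatsIn_coe (F := F.toFinset) (by rwa [Set.coe_toFinset])
  rw [Set.coe_toFinset] at hflats
  rw [hflats, ← card_sub_dim_eq_sum_alphaIn, sdim_eq_dim_toFinset]
  ring

noncomputable def coveredFlats (Sig : Finset (Set α)) : Finset (Finset α) :=
  {Y | G.IsClosed ↑Y ∧ ∃ E ∈ Sig, ↑Y ⊆ E}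

lemma flatSum_eq {Sig : Finset (Set α)} (hSig : ∀ E ∈ Sig, G.IsClosed E) :
    G.flatSum Sig = #(⋃₀ (Sig : Set (Set α))).toFinset -
      ∑ Y ∈ G.coveredFlats Sig, G.alphaIn Set.univ Y := by
  calc G.flatSum Sig
      = ∑ t ∈ Sig.powerset with t.Nonempty, (-1) ^ (#t + 1) *
          ((∑ a with ∀ E ∈ t, a ∈ E, 1 : ℤ) -
            ∑ Y ∈ {Y : Finset α | G.IsClosed ↑Y} with ∀ E ∈ t, ↑Y ⊆ E, G.alphaIn Set.univ Y) := by
        refine sum_congr (filter_congr fun t _ => nonempty_iff_ne_empty.symm) fun t ht => ?_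
        have hclosed : G.IsClosed (⋂₀ ↑t) :=
          G.isClosed_sInter fun E hE => hSig E ((mem_powerset.mp (mem_filter.mp ht).1) hE)
        rw [G.sdim_eq_card_sub_sum_alphaIn hclosed, sum_const, nsmul_one, flatsIn, filter_filter]
        congr 3
        · congr 1; ext; simp
        · ext; simp [Set.subset_sInter_iff]
    _ = (∑ a with ∃ E ∈ Sig, a ∈ E, 1 : ℤ) -
          ∑ Y ∈ {Y : Finset α | G.IsClosed ↑Y} with ∃ E ∈ Sig, ↑Y ⊆ E, G.alphaIn Set.univ Y := by
        simp_rw [mul_sub, sum_sub_distrib, inclusion_exclusion_sum_filter_exists]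
        -- the two sides differ only in their `Decidable` instances
        congr!
    _ = _ := by
        rw [sum_const, nsmul_one, filter_filter, coveredFlats]
        congr 3
        ext
        simp

theorem alphaIn_univ_nonneg_of_flatIn (hG : G.FlatIn Set.univ) (X : Finset α) :
    0 ≤ G.alphaIn Set.univ X := by
  set Sig : Finset (Set α) := (G.properFlats X).image (↑)
  have hSig : ∀ E ∈ Sig, G.IsClosed E := by
    simp only [Sig, mem_image, properFlats, mem_filter, mem_univ, true_and]
    rintro _ ⟨Y, ⟨hY, -⟩, rfl⟩
    exact hY
  have hcovered : G.coveredFlats Sig = G.properFlats X := by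
    ext Y
    simp only [coveredFlats, properFlats, Sig, mem_filter, mem_univ, true_and, mem_image,
      exists_exists_and_eq_and, coe_subset]
    constructor
    · rintro ⟨hY, Z, ⟨-, hZX⟩, hYZ⟩
      exact ⟨hY, hYZ.trans_ssubset hZX⟩
    · rintro ⟨hY, hYX⟩
      exact ⟨hY, Y, ⟨hY, hYX⟩, subset_rfl⟩
  have hflat :=
    hG Sig (fun E hE => G.isClosedIn_univ_iff.mpr (hSig E hE)) fun E _ => G.edim_ne_top E
  rw [G.flatSum_eq hSig, hcovered, sdim_eq_dim_toFinset] at hflat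
  set U := (⋃₀ (Sig : Set (Set α))).toFinset
  have hUX : U ⊆ X := by
    intro a ha
    simp only [U, Sig, Set.mem_toFinset, Set.mem_sUnion, coe_image, Set.mem_image, mem_coe,
      properFlats, mem_filter, mem_univ, true_and] at ha
    obtain ⟨_, ⟨Z, ⟨-, hZX⟩, rfl⟩, haZ⟩ := ha
    exact hZX.subset haZ
  have hdim := G.dim_union_le U (X \ U)
  rw [union_sdiff_of_subset hUX, card_sdiff_of_subset hUX] at hdim
  have hcard := card_le_card hUX
  rw [alphaIn_univ_eq]
  omega

theorem flatIn_univ_of_alphaIn_nonneg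
    (h : ∀ X : Finset α, (∃ T : Finset (Finset α), (∀ Y ∈ T, G.IsClosed ↑Y) ∧ X = T.sup id) →
      0 ≤ G.alphaIn Set.univ X) :
    G.FlatIn Set.univ := by
  intro Sig hSig _
  replace hSig : ∀ E ∈ Sig, G.IsClosed E := fun E hE => G.isClosedIn_univ_iff.mp (hSig E hE)
  rw [G.flatSum_eq hSig, sdim_eq_dim_toFinset]
  set U := (⋃₀ (Sig : Set (Set α))).toFinset
  have hU := G.card_sub_dim_eq_sum_alphaIn U
  have hcovered : G.coveredFlats Sig ⊆ insert U (G.properFlats U) := by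
    intro Y hY
    simp only [coveredFlats, mem_filter, mem_univ, true_and] at hY
    obtain ⟨hYclosed, E, hE, hYE⟩ := hY
    have hYU : Y ⊆ U := fun a ha => Set.mem_toFinset.mpr ⟨E, hE, hYE ha⟩
    rcases eq_or_ne Y U with rfl | hne
    · exact mem_insert_self _ _
    · exact mem_insert_of_mem <| mem_filter.mpr ⟨mem_univ _, hYclosed, hYU.ssubset_of_ne hne⟩
  have hnonneg : ∀ Y ∈ insert U (G.properFlats U), 0 ≤ G.alphaIn Set.univ Y := by
    intro Y hY
    rcases mem_insert.mp hY with rfl | hY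
    · refine h _ ⟨Sig.image fun E => E.toFinset, ?_, ?_⟩
      · simpa using fun E hE => hSig E hE
      · ext; simp [U]
    · exact h Y ⟨{Y}, by simpa [properFlats] using (mem_filter.mp hY).2.1, by simp⟩
  linarith [sum_le_sum_of_subset_of_nonneg hcovered fun Y hY _ => hnonneg Y hY]

end Fintype

end Pregeometry

/-- a finite pregeometry is flat iff `α_G(X) ≥ 0` for every `X`
that is a union of closed sets. -/
theorem flat_iff_alpha_nonneg {α : Type*} [DecidableEq α] [Fintype α]
    (G : Pregeometry α) :
    G.FlatIn Set.univ ↔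
      ∀ X : Finset α,
        (∃ T : Finset (Finset α), (∀ Y ∈ T, G.IsClosed ↑Y) ∧ X = T.sup id) →
        0 ≤ G.alphaIn Set.univ X :=
  ⟨fun hG X _ => G.alphaIn_univ_nonneg_of_flatIn hG X, G.flatIn_univ_of_alphaIn_nonneg⟩
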